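/- arXiv:1311.6442 — 7 statements merged into one kernel-verified Lean document; each statement's English description precedes it below -/
import Mathlib

section
/- Let h(x,y) := ∫_x^y μ(u) du for x ≤ y, and define the first-order operator D acting on smooth functions F of two variables by (DF)(x,y) := √(a(y)) ∂_y F(x,y) − √(a(x)) ∂_x F(x,y). Then for all x < y: (D(Dh))(x,y) + (a'(x)/2 − b(x)) ∂_x h(x,y) + (a'(y)/2 − b(y)) ∂_y h(x,y) = 0. In other words, h is harmonic for the operator L̃ := D² + (a'(x)/2 − b(x))∂_x + (a'(y)/2 − b(y))∂_y (the generator of the evolving-segment process). (Paper's Lemma 8.) -/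
open MeasureTheory Real

/-- Lemma 8: `h(x,y) := ∫_x^y μ` is harmonic for the evolving-segment
generator `L̃ = D² + (a'(x)/2 − b(x))∂ₓ + (a'(y)/2 − b(y))∂_y`, where
`(DF)(x,y) = √(a y) ∂_y F − √(a x) ∂ₓ F`. -/
theorem evolving_set_harmonic
    (a b : ℝ → ℝ) (ha : ∀ x, 0 < a x)
    (hsa : ContDiff ℝ (⊤ : ℕ∞) a) (hsb : ContDiff ℝ (⊤ : ℕ∞) b)
    (c : ℝ → ℝ) (hc : ∀ x, c x = ∫ y in (0:ℝ)..x, b y / a y)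
    (hint : Integrable (fun x => Real.exp (c x) / a x))
    (m : ℝ) (hm : m = ∫ x, Real.exp (c x) / a x)
    (μ : ℝ → ℝ) (hμ : ∀ x, μ x = Real.exp (c x) / (m * a x))
    (h : ℝ → ℝ → ℝ) (hh : ∀ x y, h x y = ∫ u in x..y, μ u)
    (D : (ℝ → ℝ → ℝ) → ℝ → ℝ → ℝ)
    (hD : ∀ (F : ℝ → ℝ → ℝ) (x y : ℝ),
      D F x y = Real.sqrt (a y) * deriv (fun y' => F x y') y
              - Real.sqrt (a x) * deriv (fun x' => F x' y) x) :
    ∀ x y : ℝ, x < y →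
      D (D h) x y
          + (deriv a x / 2 - b x) * deriv (fun x' => h x' y) x
          + (deriv a y / 2 - b y) * deriv (fun y' => h x y') y = 0 := by
  have hane : ∀ t, a t ≠ 0 := fun t => (ha t).ne'
  have hca : Continuous fun t => b t / a t :=
    hsb.continuous.div hsa.continuous hane
  have hmpos : 0 < m := by
    rw [hm]
    rw [integral_pos_iff_support_of_nonneg
      (fun t => (div_pos (Real.exp_pos _) (ha t)).le) hint]
    have hs : Function.support (fun x => Real.exp (c x) / a x) = Set.univ :=
      Set.eq_univ_of_forall fun t =>
        Function.mem_support.mpr (div_pos (Real.exp_pos _) (ha t)).ne'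
    rw [hs]
    simp
  have hcd : ∀ t, HasDerivAt c (b t / a t) t := by
    intro t
    have hceq : c = fun u => ∫ s in (0:ℝ)..u, b s / a s := funext hc
    rw [hceq]
    exact (hca.integral_hasStrictDerivAt 0 t).hasDerivAt
  have had : ∀ t, HasDerivAt a (deriv a t) t := fun t =>
    ((hsa.differentiable (by simp)) t).hasDerivAt
  have hcc : Continuous c := continuous_iff_continuousAt.mpr fun t => (hcd t).continuousAt
  have hμc : Continuous μ := by
    have hfun : μ = fun t => Real.exp (c t) / (m * a t) := funext hμ
    rw [hfun]
    exact (Real.continuous_exp.comp hcc).div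
      (continuous_const.mul hsa.continuous) (fun t => mul_ne_zero hmpos.ne' (hane t))
  have hμd : ∀ t, HasDerivAt μ
      (μ t * (b t / a t) - μ t * (deriv a t / a t)) t := by
    intro t
    have hfun : μ = fun u => Real.exp (c u) / (m * a u) := funext hμ
    have h1 : HasDerivAt (fun u => Real.exp (c u)) (Real.exp (c t) * (b t / a t)) t :=
      (hcd t).exp
    have h2 : HasDerivAt (fun u => m * a u) (m * deriv a t) t := (had t).const_mul m
    have hne : m * a t ≠ 0 := mul_ne_zero hmpos.ne' (hane t)
    have h3 := h1.div h2 hne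
    have heq : Real.exp (c t) / (m * a t) * (b t / a t)
          - Real.exp (c t) / (m * a t) * (deriv a t / a t)
        = (Real.exp (c t) * (b t / a t) * (m * a t) - Real.exp (c t) * (m * deriv a t))
            / (m * a t) ^ 2 := by
      field_simp [hmpos.ne', hane t]
    rw [hfun]
    simp only []
    rw [heq]
    exact h3
  have hgd : ∀ t, HasDerivAt (fun s => Real.sqrt (a s) * μ s)
      (μ t * (b t - deriv a t / 2) / Real.sqrt (a t)) t := by
    intro t
    have hs : HasDerivAt (fun s => Real.sqrt (a s)) (deriv a t / (2 * Real.sqrt (a t))) t :=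
      (had t).sqrt (hane t)
    have hp : HasDerivAt (fun s => Real.sqrt (a s) * μ s) _ t := hs.mul (hμd t)
    convert hp using 1
    have hsne : Real.sqrt (a t) ≠ 0 := Real.sqrt_ne_zero'.mpr (ha t)
    have hsql : Real.sqrt (a t) * Real.sqrt (a t) = a t := Real.mul_self_sqrt (ha t).le
    rw [← hsql]
    field_simp
    rw [Real.sqrt_sq (Real.sqrt_nonneg _)]
    ring
  have hdy : ∀ x t, deriv (fun y' => h x y') t = μ t := by
    intro x t
    have heq : (fun y' => h x y') = fun y' => ∫ u in x..y', μ u := funext (hh x)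
    rw [heq]
    exact ((hμc.integral_hasStrictDerivAt x t).hasDerivAt).deriv
  have hdx : ∀ y t, deriv (fun x' => h x' y) t = -μ t := by
    intro y t
    have heq : (fun x' => h x' y) = fun x' => ∫ u in x'..y, μ u :=
      funext (fun x' => hh x' y)
    rw [heq]
    exact (intervalIntegral.integral_hasStrictDerivAt_left
      (hμc.intervalIntegrable _ _) (hμc.stronglyMeasurableAtFilter _ _)
      hμc.continuousAt).hasDerivAt.deriv
  have hDh : ∀ x y, D h x y = Real.sqrt (a y) * μ y + Real.sqrt (a x) * μ x := by
    intro x y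
    rw [hD, hdy, hdx]
    ring
  intro x y _
  have hd1 : deriv (fun y' => D h x y') y = μ y * (b y - deriv a y / 2) / Real.sqrt (a y) := by
    have heq : (fun y' => D h x y') =
        fun y' => Real.sqrt (a y') * μ y' + Real.sqrt (a x) * μ x := funext (hDh x)
    rw [heq]
    exact ((hgd y).add_const _).deriv
  have hd2 : deriv (fun x' => D h x' y) x = μ x * (b x - deriv a x / 2) / Real.sqrt (a x) := by
    have heq : (fun x' => D h x' y) =
        fun x' => Real.sqrt (a y) * μ y + Real.sqrt (a x') * μ x' :=
      funext (fun x' => hDh x' y)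
    rw [heq]
    exact ((hgd x).const_add _).deriv
  rw [hD (D h), hd1, hd2, hdx, hdy]
  have hsy : Real.sqrt (a y) ≠ 0 := Real.sqrt_ne_zero'.mpr (ha y)
  have hsx : Real.sqrt (a x) ≠ 0 := Real.sqrt_ne_zero'.mpr (ha x)
  field_simp
  ring
end

section
/- For every twice continuously differentiable f : ℝ → ℝ and all real numbers x < y, the intertwining relation Λ[L f](x,y) = L*[Λ f](x,y) holds, where Λf(x,y) := (∫_x^y f(u) μ(u) du)/(∫_x^y μ(u) du), (DF)(x,y) := √(a(y)) ∂_y F(x,y) − √(a(x)) ∂_x F(x,y), and L*F := D(DF) + (a'(x)/2 − b(x)) ∂_x F + (a'(y)/2 − b(y)) ∂_y F + 2·((√(a(x))μ(x) + √(a(y))μ(y))/(∫_x^y μ(u) du))·(DF). (Paper's Lemma 18, interior case.) -/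
open MeasureTheory Real

set_option maxHeartbeats 4000000

/-- Lemma 18, interior case: the intertwining relation
`Λ[L f](x,y) = L*[Λ f](x,y)` for `C²` functions `f` and `x < y`. -/
theorem intertwining_relation
    (a b : ℝ → ℝ) (ha : ∀ x, 0 < a x)
    (hsa : ContDiff ℝ (⊤ : ℕ∞) a) (hsb : ContDiff ℝ (⊤ : ℕ∞) b)
    (c : ℝ → ℝ) (hc : ∀ x, c x = ∫ y in (0:ℝ)..x, b y / a y)
    (hint : Integrable (fun x => Real.exp (c x) / a x))
    (m : ℝ) (hm : m = ∫ x, Real.exp (c x) / a x)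
    (μ : ℝ → ℝ) (hμ : ∀ x, μ x = Real.exp (c x) / (m * a x))
    (Λ : (ℝ → ℝ) → ℝ → ℝ → ℝ)
    (hΛ : ∀ (f : ℝ → ℝ) (x y : ℝ),
      Λ f x y = (∫ u in x..y, f u * μ u) / ∫ u in x..y, μ u)
    (D : (ℝ → ℝ → ℝ) → ℝ → ℝ → ℝ)
    (hD : ∀ (F : ℝ → ℝ → ℝ) (x y : ℝ),
      D F x y = Real.sqrt (a y) * deriv (fun y' => F x y') y
              - Real.sqrt (a x) * deriv (fun x' => F x' y) x) :
    ∀ f : ℝ → ℝ, ContDiff ℝ 2 f → ∀ x y : ℝ, x < y →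
      Λ (fun u => a u * deriv (deriv f) u + b u * deriv f u) x y
        = D (D (Λ f)) x y
            + (deriv a x / 2 - b x) * deriv (fun x' => Λ f x' y) x
            + (deriv a y / 2 - b y) * deriv (fun y' => Λ f x y') y
            + 2 * ((Real.sqrt (a x) * μ x + Real.sqrt (a y) * μ y)
                / ∫ u in x..y, μ u) * D (Λ f) x y := by
  intro f hf x y hxy
  -- basic continuity / positivity facts
  have hane : ∀ u, a u ≠ 0 := fun u => (ha u).ne'
  have hba : Continuous (fun u => b u / a u) :=
    hsb.continuous.div hsa.continuous hane
  have hcderiv : ∀ u, HasDerivAt c (b u / a u) u := by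
    intro u
    have hceq : c = fun t => ∫ y in (0:ℝ)..t, b y / a y := funext hc
    rw [hceq]
    exact intervalIntegral.integral_hasDerivAt_right
      (hba.intervalIntegrable _ _) (hba.stronglyMeasurableAtFilter _ _)
      hba.continuousAt
  have hccont : Continuous c :=
    continuous_iff_continuousAt.mpr fun u => (hcderiv u).continuousAt
  have hm0 : 0 < m := by
    rw [hm]
    refine (integral_pos_iff_support_of_nonneg
      (fun u => (div_pos (Real.exp_pos _) (ha u)).le) hint).mpr ?_
    have : Function.support (fun u => Real.exp (c u) / a u) = Set.univ := by
      ext u; simp [Function.mem_support, hane u]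
    rw [this]
    simp
  have hμpos : ∀ u, 0 < μ u := by
    intro u; rw [hμ]; exact div_pos (Real.exp_pos _) (mul_pos hm0 (ha u))
  have hμcont : Continuous μ := by
    have : μ = fun u => Real.exp (c u) / (m * a u) := funext hμ
    rw [this]
    exact (Real.continuous_exp.comp hccont).div (continuous_const.mul hsa.continuous)
      fun u => (mul_pos hm0 (ha u)).ne'
  have hau : ∀ u, HasDerivAt a (deriv a u) u :=
    fun u => ((hsa.differentiable (by simp)) u).hasDerivAt
  have hμderiv : ∀ u, HasDerivAt μ ((b u - deriv a u) * μ u / a u) u := by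
    intro u
    have hμeq : μ = fun t => Real.exp (c t) / (m * a t) := funext hμ
    have h1 : HasDerivAt (fun t => Real.exp (c t)) (Real.exp (c u) * (b u / a u)) u :=
      (Real.hasDerivAt_exp _).comp u (hcderiv u)
    have h2 : HasDerivAt (fun t => m * a t) (m * deriv a u) u := (hau u).const_mul m
    have h := h1.div h2 (mul_pos hm0 (ha u)).ne'
    have hveq : (b u - deriv a u) * μ u / a u
        = (Real.exp (c u) * (b u / a u) * (m * a u) - Real.exp (c u) * (m * deriv a u))
            / (m * a u) ^ 2 := by
      rw [hμ u]; field_simp [hane u, hm0.ne']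
    rw [hveq, hμeq]; exact h
  -- regularity of f
  have hfd : Differentiable ℝ f := hf.differentiable (by simp)
  have hf1 : ContDiff ℝ 1 (deriv f) := by
    have h2 : (2 : WithTop ℕ∞) = 1 + 1 := by norm_num
    exact (contDiff_succ_iff_deriv.mp (h2 ▸ hf)).2.2
  have hf'd : Differentiable ℝ (deriv f) := hf1.differentiable (by simp)
  have hf'c : Continuous (deriv f) := hf'd.continuous
  have hf''c : Continuous (deriv (deriv f)) := hf1.continuous_deriv le_rfl
  have hfc : Continuous f := hfd.continuous
  -- nonvanishing of the normalization integral
  have hGpos : ∀ p q : ℝ, p < q → 0 < ∫ u in p..q, μ u := fun p q h =>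
    intervalIntegral.intervalIntegral_pos_of_pos (hμcont.intervalIntegrable p q)
      hμpos h
  have hGne : ∀ p q : ℝ, p ≠ q → (∫ u in p..q, μ u) ≠ 0 := by
    intro p q h
    rcases h.lt_or_gt with h' | h'
    · exact (hGpos p q h').ne'
    · rw [intervalIntegral.integral_symm]
      exact neg_ne_zero.mpr (hGpos q p h').ne'
  have hfμc : Continuous (fun u => f u * μ u) := hfc.mul hμcont
  -- derivative of Λ f in the second variable
  have hdy : ∀ p q : ℝ, p ≠ q → HasDerivAt (fun t => Λ f p t)
      (μ q * (f q - Λ f p q) / ∫ u in p..q, μ u) q := by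
    intro p q hpq
    have hfun : (fun t => Λ f p t)
        = fun t => (∫ u in p..t, f u * μ u) / ∫ u in p..t, μ u :=
      funext fun t => hΛ f p t
    have hN : HasDerivAt (fun t => ∫ u in p..t, f u * μ u) (f q * μ q) q :=
      intervalIntegral.integral_hasDerivAt_right (hfμc.intervalIntegrable _ _)
        (hfμc.stronglyMeasurableAtFilter _ _) hfμc.continuousAt
    have hG : HasDerivAt (fun t => ∫ u in p..t, μ u) (μ q) q :=
      intervalIntegral.integral_hasDerivAt_right (hμcont.intervalIntegrable _ _)
        (hμcont.stronglyMeasurableAtFilter _ _) hμcont.continuousAt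
    have h := hN.div hG (hGne p q hpq)
    have hveq : μ q * (f q - Λ f p q) / ∫ u in p..q, μ u
        = (f q * μ q * (∫ u in p..q, μ u) - (∫ u in p..q, f u * μ u) * μ q)
            / (∫ u in p..q, μ u) ^ 2 := by
      rw [hΛ f p q]
      have hG0 := hGne p q hpq
      generalize hGG : (∫ u in p..q, μ u) = G at hG0 ⊢
      generalize (∫ u in p..q, f u * μ u) = N
      field_simp
    rw [hfun, hveq]; exact h
  -- derivative of Λ f in the first variable
  have hdx : ∀ p q : ℝ, p ≠ q → HasDerivAt (fun t => Λ f t q)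
      (μ p * (Λ f p q - f p) / ∫ u in p..q, μ u) p := by
    intro p q hpq
    have hfun : (fun t => Λ f t q)
        = fun t => (∫ u in t..q, f u * μ u) / ∫ u in t..q, μ u :=
      funext fun t => hΛ f t q
    have hN : HasDerivAt (fun t => ∫ u in t..q, f u * μ u) (-(f p * μ p)) p :=
      intervalIntegral.integral_hasDerivAt_left (hfμc.intervalIntegrable _ _)
        (hfμc.stronglyMeasurableAtFilter _ _) hfμc.continuousAt
    have hG : HasDerivAt (fun t => ∫ u in t..q, μ u) (-μ p) p :=
      intervalIntegral.integral_hasDerivAt_left (hμcont.intervalIntegrable _ _)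
        (hμcont.stronglyMeasurableAtFilter _ _) hμcont.continuousAt
    have h := hN.div hG (hGne p q hpq)
    have hveq : μ p * (Λ f p q - f p) / ∫ u in p..q, μ u
        = (-(f p * μ p) * (∫ u in p..q, μ u) - (∫ u in p..q, f u * μ u) * -μ p)
            / (∫ u in p..q, μ u) ^ 2 := by
      rw [hΛ f p q]
      have hG0 := hGne p q hpq
      generalize hGG : (∫ u in p..q, μ u) = G at hG0 ⊢
      generalize (∫ u in p..q, f u * μ u) = N
      field_simp
      ring
    rw [hfun, hveq]; exact h
  -- explicit formula for D (Λ f)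
  have hDval : ∀ p q : ℝ, p ≠ q → D (Λ f) p q
      = Real.sqrt (a q) * (μ q * (f q - Λ f p q) / ∫ u in p..q, μ u)
        - Real.sqrt (a p) * (μ p * (Λ f p q - f p) / ∫ u in p..q, μ u) := by
    intro p q hpq
    rw [hD, (hdy p q hpq).deriv, (hdx p q hpq).deriv]
  -- second derivative in y
  have heqy : (fun t => D (Λ f) x t) =ᶠ[nhds y]
      (fun t => Real.sqrt (a t) * (μ t * (f t - Λ f x t) / ∫ u in x..t, μ u)
        - Real.sqrt (a x) * (μ x * (Λ f x t - f x) / ∫ u in x..t, μ u)) := by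
    filter_upwards [Ioi_mem_nhds hxy] with t ht
    exact hDval x t (ne_of_lt ht)
  have hGy : HasDerivAt (fun t => ∫ u in x..t, μ u) (μ y) y :=
    intervalIntegral.integral_hasDerivAt_right (hμcont.intervalIntegrable _ _)
      (hμcont.stronglyMeasurableAtFilter _ _) hμcont.continuousAt
  have hsqy : HasDerivAt (fun t => Real.sqrt (a t))
      (deriv a y / (2 * Real.sqrt (a y))) y := (hau y).sqrt (hane y)
  have hP := ((hsqy.mul (((hμderiv y).mul (((hfd y).hasDerivAt).sub
        (hdy x y hxy.ne))).div hGy (hGne x y hxy.ne))).sub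
      (((((hdy x y hxy.ne).sub_const (f x)).const_mul (μ x)).div hGy
        (hGne x y hxy.ne)).const_mul (Real.sqrt (a x))))
  have e1 := heqy.deriv_eq.trans hP.deriv
  -- second derivative in x
  have heqx : (fun t => D (Λ f) t y) =ᶠ[nhds x]
      (fun t => Real.sqrt (a y) * (μ y * (f y - Λ f t y) / ∫ u in t..y, μ u)
        - Real.sqrt (a t) * (μ t * (Λ f t y - f t) / ∫ u in t..y, μ u)) := by
    filter_upwards [Iio_mem_nhds hxy] with t ht
    exact hDval t y (ne_of_lt ht)
  have hGx : HasDerivAt (fun t => ∫ u in t..y, μ u) (-μ x) x :=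
    intervalIntegral.integral_hasDerivAt_left (hμcont.intervalIntegrable _ _)
      (hμcont.stronglyMeasurableAtFilter _ _) hμcont.continuousAt
  have hsqx : HasDerivAt (fun t => Real.sqrt (a t))
      (deriv a x / (2 * Real.sqrt (a x))) x := (hau x).sqrt (hane x)
  have hQ := (((((((hdx x y hxy.ne).const_sub (f y)).const_mul (μ y)).div hGx
        (hGne x y hxy.ne)).const_mul (Real.sqrt (a y)))).sub
      (hsqx.mul (((hμderiv x).mul ((hdx x y hxy.ne).sub
        ((hfd x).hasDerivAt))).div hGx (hGne x y hxy.ne))))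
  have e2 := heqx.deriv_eq.trans hQ.deriv
  -- integration by parts for the left-hand side
  have hg : ∀ u : ℝ, HasDerivAt (fun t => a t * μ t * deriv f t)
      ((a u * deriv (deriv f) u + b u * deriv f u) * μ u) u := by
    intro u
    have h := ((hau u).mul (hμderiv u)).mul ((hf'd u).hasDerivAt)
    have hveq : (a u * deriv (deriv f) u + b u * deriv f u) * μ u
        = (deriv a u * μ u + a u * ((b u - deriv a u) * μ u / a u)) * deriv f u
          + a u * μ u * deriv (deriv f) u := by
      field_simp [hane u]
      ring
    rw [hveq]; exact h
  have hLint : Continuous (fun u => (a u * deriv (deriv f) u + b u * deriv f u) * μ u) :=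
    ((hsa.continuous.mul hf''c).add (hsb.continuous.mul hf'c)).mul hμcont
  have hLf : ∫ u in x..y, (a u * deriv (deriv f) u + b u * deriv f u) * μ u
      = a y * μ y * deriv f y - a x * μ x * deriv f x :=
    intervalIntegral.integral_eq_sub_of_hasDerivAt (fun u _ => hg u)
      (hLint.intervalIntegrable x y)
  -- assemble
  rw [hΛ, hLf, hD (D (Λ f)) x y, e1, e2, hDval x y hxy.ne,
    (hdx x y hxy.ne).deriv, (hdy x y hxy.ne).deriv]
  set A := Real.sqrt (a x) with hA
  set B := Real.sqrt (a y) with hB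
  have hA0 : A ≠ 0 := (Real.sqrt_pos.mpr (ha x)).ne'
  have hB0 : B ≠ 0 := (Real.sqrt_pos.mpr (ha y)).ne'
  have hAx : A * A = a x := Real.mul_self_sqrt (ha x).le
  have hAy : B * B = a y := Real.mul_self_sqrt (ha y).le
  have hG0 : (∫ u in x..y, μ u) ≠ 0 := hGne x y hxy.ne
  rw [← hAx, ← hAy]
  simp only [Pi.mul_apply, Pi.sub_apply, Pi.div_apply, Pi.neg_apply, Pi.add_apply]
  field_simp [hA0, hB0, hG0]
  ring
end

section
/- For every real α > 0: ∫_1^∞ exp(x^α) · (∫_x^∞ exp(−y^α) dy) dx < ∞ if and only if α > 2. (The paper's claim that for a potential U with U(x) = |x|^α for large |x|, the strong-stationary-time condition (17) is satisfied if and only if α > 2.) -/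
open MeasureTheory Real Set

/-- value of the exponential tail lintegral -/
lemma aux_inner_exp (x : ℝ) {c : ℝ} (hc : 0 < c) :
    ∫⁻ y in Ioi x, ENNReal.ofReal (Real.exp (-(c * (y - x)))) = ENNReal.ofReal (1 / c) := by
  have hint : IntegrableOn (fun y : ℝ => Real.exp (-(c * (y - x)))) (Ioi x) := by
    have h1 : IntegrableOn (fun y : ℝ => Real.exp (-c * y)) (Ioi x) :=
      exp_neg_integrableOn_Ioi x hc
    have h2 : IntegrableOn (fun y : ℝ => Real.exp (c * x) * Real.exp (-c * y)) (Ioi x) :=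
      h1.const_mul (Real.exp (c * x))
    refine h2.congr_fun (fun y _ => ?_) measurableSet_Ioi
    dsimp only; rw [← Real.exp_add]; ring_nf
  rw [← ofReal_integral_eq_lintegral_ofReal hint
    (Filter.Eventually.of_forall fun y => (Real.exp_pos _).le)]
  congr 1
  have heq : ∀ y : ℝ, Real.exp (-(c * (y - x))) = Real.exp (c * x) * Real.exp (-(c * y)) := by
    intro y; rw [← Real.exp_add]; ring_nf
  calc ∫ y in Ioi x, Real.exp (-(c * (y - x)))
      = ∫ y in Ioi x, Real.exp (c * x) * Real.exp (-(c * y)) := by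
        exact setIntegral_congr_fun measurableSet_Ioi fun y _ => heq y
    _ = Real.exp (c * x) * ∫ y in Ioi x, Real.exp (-(c * y)) := integral_const_mul _ _
    _ = Real.exp (c * x) * (c⁻¹ * Real.exp (-(c * x))) := by
        rw [integral_comp_mul_left_Ioi (fun u => Real.exp (-u)) x hc, integral_exp_neg_Ioi,
          smul_eq_mul]
    _ = 1 / c := by
        rw [show Real.exp (c * x) * (c⁻¹ * Real.exp (-(c * x)))
            = (Real.exp (c * x) * Real.exp (-(c * x))) * c⁻¹ by ring, ← Real.exp_add]
        simp [one_div]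

/-- convexity lower bound: `x^α + α x^(α-1) (y - x) ≤ y^α` -/
lemma aux_convex {α x y : ℝ} (hα : 1 ≤ α) (hx : 1 ≤ x) (hxy : x ≤ y) :
    x ^ α + (α * x ^ (α - 1)) * (y - x) ≤ y ^ α := by
  have hx0 : (0:ℝ) < x := lt_of_lt_of_le one_pos hx
  have hs : (-1:ℝ) ≤ (y - x) / x := by
    have : (0:ℝ) ≤ (y - x) / x := div_nonneg (by linarith) hx0.le
    linarith
  have hB := one_add_mul_self_le_rpow_one_add hs hα
  have h1 : 1 + (y - x) / x = y / x := by field_simp; ring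
  rw [h1] at hB
  have h2 : (y / x) ^ α = y ^ α / x ^ α :=
    Real.div_rpow (le_trans hx0.le hxy) hx0.le α
  rw [h2] at hB
  have hxα : (0:ℝ) < x ^ α := Real.rpow_pos_of_pos hx0 α
  have h3 : x ^ (α - 1) = x ^ α / x := by
    rw [Real.rpow_sub hx0, Real.rpow_one]
  rw [h3]
  have := mul_le_mul_of_nonneg_left hB hxα.le
  rw [mul_div_cancel₀ _ hxα.ne'] at this
  calc x ^ α + α * (x ^ α / x) * (y - x)
      = x ^ α * (1 + α * ((y - x) / x)) := by field_simp
    _ ≤ y ^ α := this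

/-- for `0 < α ≤ 2` and `x ≥ 1`, `(x + x⁻¹)^α ≤ x^α + 3` -/
lemma aux_shift {α x : ℝ} (hα : 0 < α) (hα2 : α ≤ 2) (hx : 1 ≤ x) :
    (x + x⁻¹) ^ α ≤ x ^ α + 3 := by
  have hx0 : (0:ℝ) < x := lt_of_lt_of_le one_pos hx
  set u : ℝ := x⁻¹ * x⁻¹ with hu
  have hu0 : 0 < u := by positivity
  have hu1 : u ≤ 1 := by
    have hi : x⁻¹ ≤ 1 := by
      rw [inv_le_one_iff₀]; right; exact hx
    nlinarith [inv_pos.mpr hx0]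
  have h1 : x + x⁻¹ = x * (1 + u) := by
    rw [hu, mul_add, mul_one, ← mul_assoc, mul_inv_cancel₀ hx0.ne', one_mul]
  have h2 : (x * (1 + u)) ^ α = x ^ α * (1 + u) ^ α :=
    Real.mul_rpow hx0.le (by positivity)
  have h3 : (1 + u) ^ α ≤ (1 + u) ^ (2:ℝ) :=
    Real.rpow_le_rpow_of_exponent_le (by linarith) hα2
  have h4 : (1 + u) ^ (2:ℝ) ≤ 1 + 3 * u := by
    rw [Real.rpow_two]; nlinarith
  have h5 : x ^ α * u ≤ 1 := by
    have : x ^ α ≤ x ^ (2:ℝ) := Real.rpow_le_rpow_of_exponent_le hx hα2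
    have h6 : x ^ (2:ℝ) * u = 1 := by
      rw [Real.rpow_two, sq, hu]; field_simp
    nlinarith [Real.rpow_pos_of_pos hx0 α]
  have hxα : (0:ℝ) < x ^ α := Real.rpow_pos_of_pos hx0 α
  calc (x + x⁻¹) ^ α = x ^ α * (1 + u) ^ α := by rw [h1, h2]
    _ ≤ x ^ α * (1 + 3 * u) := by nlinarith
    _ = x ^ α + 3 * (x ^ α * u) := by ring
    _ ≤ x ^ α + 3 := by nlinarith

/-- for `α > 0`,
`∫_1^∞ e^{x^α} (∫_x^∞ e^{−y^α} dy) dx < ∞ ↔ α > 2`. -/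
theorem power_potential_criterion (α : ℝ) (hα : 0 < α) :
    (∫⁻ x in Ioi (1:ℝ),
        ENNReal.ofReal (Real.exp (x ^ α)) *
          ∫⁻ y in Ioi x, ENNReal.ofReal (Real.exp (-(y ^ α)))) < ⊤
      ↔ 2 < α := by
  constructor
  · -- finiteness implies α > 2
    intro hfin
    by_contra hcon
    push_neg at hcon
    -- lower bound the integrand by `exp(-3) * x⁻¹`
    have hbound : ∀ x : ℝ, x ∈ Ioi (1:ℝ) →
        ENNReal.ofReal (Real.exp (-3) * x⁻¹) ≤
          ENNReal.ofReal (Real.exp (x ^ α)) *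
            ∫⁻ y in Ioi x, ENNReal.ofReal (Real.exp (-(y ^ α))) := by
      intro x hx
      have hx1 : (1:ℝ) < x := hx
      have hx0 : (0:ℝ) < x := lt_trans one_pos hx1
      have hinv0 : (0:ℝ) < x⁻¹ := inv_pos.mpr hx0
      -- inner integral lower bound
      have hIl : ENNReal.ofReal (Real.exp (-(x ^ α + 3)) * x⁻¹) ≤
          ∫⁻ y in Ioi x, ENNReal.ofReal (Real.exp (-(y ^ α))) := by
        have hsub : Ioc x (x + x⁻¹) ⊆ Ioi x := Ioc_subset_Ioi_self
        calc ENNReal.ofReal (Real.exp (-(x ^ α + 3)) * x⁻¹)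
            = ENNReal.ofReal (Real.exp (-(x ^ α + 3))) * volume (Ioc x (x + x⁻¹)) := by
              rw [Real.volume_Ioc, show x + x⁻¹ - x = x⁻¹ by ring,
                ENNReal.ofReal_mul (Real.exp_pos _).le]
          _ = ∫⁻ _ in Ioc x (x + x⁻¹), ENNReal.ofReal (Real.exp (-(x ^ α + 3))) := by
              rw [setLIntegral_const]
          _ ≤ ∫⁻ y in Ioc x (x + x⁻¹), ENNReal.ofReal (Real.exp (-(y ^ α))) := by
              apply lintegral_mono_ae
              rw [ae_restrict_iff' measurableSet_Ioc]
              filter_upwards with y hy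
              apply ENNReal.ofReal_le_ofReal
              apply Real.exp_le_exp.mpr
              refine neg_le_neg ?_
              calc y ^ α ≤ (x + x⁻¹) ^ α :=
                    Real.rpow_le_rpow (le_trans hx0.le (le_of_lt hy.1)) hy.2 hα.le
                _ ≤ x ^ α + 3 := aux_shift hα hcon hx1.le
          _ ≤ ∫⁻ y in Ioi x, ENNReal.ofReal (Real.exp (-(y ^ α))) :=
              lintegral_mono_set hsub
      calc ENNReal.ofReal (Real.exp (-3) * x⁻¹)
          = ENNReal.ofReal (Real.exp (x ^ α)) *
              ENNReal.ofReal (Real.exp (-(x ^ α + 3)) * x⁻¹) := by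
            rw [← ENNReal.ofReal_mul (Real.exp_pos _).le]
            congr 1
            rw [← mul_assoc, ← Real.exp_add]
            have h9 : x ^ α + -(x ^ α + 3) = -3 := by ring
            rw [h9]
        _ ≤ ENNReal.ofReal (Real.exp (x ^ α)) *
              ∫⁻ y in Ioi x, ENNReal.ofReal (Real.exp (-(y ^ α))) :=
            mul_le_mul_right hIl _
    have hle : ∫⁻ x in Ioi (1:ℝ), ENNReal.ofReal (Real.exp (-3) * x⁻¹) ≤
        ∫⁻ x in Ioi (1:ℝ),
          ENNReal.ofReal (Real.exp (x ^ α)) *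
            ∫⁻ y in Ioi x, ENNReal.ofReal (Real.exp (-(y ^ α))) := by
      apply lintegral_mono_ae
      rw [ae_restrict_iff' measurableSet_Ioi]
      filter_upwards with x hx using hbound x hx
    have hfin2 : ∫⁻ x in Ioi (1:ℝ), ENNReal.ofReal (Real.exp (-3) * x⁻¹) < ⊤ :=
      lt_of_le_of_lt hle hfin
    -- this gives integrability of x⁻¹ on Ioi 1, contradiction
    have hmeas : Measurable (fun x : ℝ => Real.exp (-3) * x⁻¹) :=
      (measurable_inv).const_mul _
    have hnn : 0 ≤ᵐ[volume.restrict (Ioi (1:ℝ))] fun x : ℝ => Real.exp (-3) * x⁻¹ := by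
      filter_upwards [ae_restrict_mem measurableSet_Ioi] with x hx
      have : (0:ℝ) < x := lt_trans one_pos hx
      positivity
    have hint : IntegrableOn (fun x : ℝ => Real.exp (-3) * x⁻¹) (Ioi (1:ℝ)) :=
      ⟨hmeas.aestronglyMeasurable, (hasFiniteIntegral_iff_ofReal hnn).mpr hfin2⟩
    have hint2 : IntegrableOn (fun x : ℝ => x ^ (-1 : ℝ)) (Ioi (1:ℝ)) := by
      have h3 : IntegrableOn (fun x : ℝ => Real.exp 3 * (Real.exp (-3) * x⁻¹)) (Ioi (1:ℝ)) :=
        hint.const_mul (Real.exp 3)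
      refine h3.congr_fun (fun x hx => ?_) measurableSet_Ioi
      have hx0 : (0:ℝ) < x := lt_trans one_pos hx
      dsimp only; rw [Real.rpow_neg_one, ← mul_assoc, ← Real.exp_add]
      norm_num
    rw [integrableOn_Ioi_rpow_iff one_pos] at hint2
    linarith
  · -- α > 2 implies finiteness
    intro hα2
    have hα1 : (1:ℝ) ≤ α := by linarith
    have hbound : ∀ x : ℝ, x ∈ Ioi (1:ℝ) →
        ENNReal.ofReal (Real.exp (x ^ α)) *
            (∫⁻ y in Ioi x, ENNReal.ofReal (Real.exp (-(y ^ α)))) ≤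
          ENNReal.ofReal (α⁻¹ * x ^ (1 - α)) := by
      intro x hx
      have hx1 : (1:ℝ) < x := hx
      have hx0 : (0:ℝ) < x := lt_trans one_pos hx1
      set c : ℝ := α * x ^ (α - 1) with hc
      have hc0 : (0:ℝ) < c := by
        rw [hc]; exact mul_pos hα (Real.rpow_pos_of_pos hx0 _)
      have hIu : (∫⁻ y in Ioi x, ENNReal.ofReal (Real.exp (-(y ^ α)))) ≤
          ENNReal.ofReal (Real.exp (-(x ^ α))) * ENNReal.ofReal (1 / c) := by
        calc (∫⁻ y in Ioi x, ENNReal.ofReal (Real.exp (-(y ^ α))))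
            ≤ ∫⁻ y in Ioi x,
                ENNReal.ofReal (Real.exp (-(x ^ α))) *
                  ENNReal.ofReal (Real.exp (-(c * (y - x)))) := by
              apply lintegral_mono_ae
              rw [ae_restrict_iff' measurableSet_Ioi]
              filter_upwards with y hy
              rw [← ENNReal.ofReal_mul (Real.exp_pos _).le, ← Real.exp_add]
              apply ENNReal.ofReal_le_ofReal
              apply Real.exp_le_exp.mpr
              have := aux_convex hα1 hx1.le (le_of_lt hy)
              rw [hc]; linarith
          _ = ENNReal.ofReal (Real.exp (-(x ^ α))) * ENNReal.ofReal (1 / c) := by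
              rw [lintegral_const_mul' _ _ ENNReal.ofReal_ne_top, aux_inner_exp x hc0]
      calc ENNReal.ofReal (Real.exp (x ^ α)) *
              (∫⁻ y in Ioi x, ENNReal.ofReal (Real.exp (-(y ^ α))))
          ≤ ENNReal.ofReal (Real.exp (x ^ α)) *
              (ENNReal.ofReal (Real.exp (-(x ^ α))) * ENNReal.ofReal (1 / c)) :=
            mul_le_mul_right hIu _
        _ = ENNReal.ofReal (α⁻¹ * x ^ (1 - α)) := by
            rw [← ENNReal.ofReal_mul (Real.exp_pos _).le,
              ← ENNReal.ofReal_mul (by positivity)]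
            congr 1
            have h1 : x ^ (1 - α) = (x ^ (α - 1))⁻¹ := by
              rw [← Real.rpow_neg hx0.le]; congr 1; ring
            have h2 : Real.exp (x ^ α) * Real.exp (-x ^ α) = 1 := by
              rw [← Real.exp_add]; simp
            rw [← mul_assoc, h2, one_mul, hc, h1, one_div, mul_inv]
    calc (∫⁻ x in Ioi (1:ℝ),
            ENNReal.ofReal (Real.exp (x ^ α)) *
              ∫⁻ y in Ioi x, ENNReal.ofReal (Real.exp (-(y ^ α))))
        ≤ ∫⁻ x in Ioi (1:ℝ), ENNReal.ofReal (α⁻¹ * x ^ (1 - α)) := by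
          apply lintegral_mono_ae
          rw [ae_restrict_iff' measurableSet_Ioi]
          filter_upwards with x hx using hbound x hx
      _ < ⊤ := by
          have : IntegrableOn (fun x : ℝ => α⁻¹ * x ^ (1 - α)) (Ioi (1:ℝ)) :=
            (integrableOn_Ioi_rpow_of_lt (by linarith) one_pos).const_mul α⁻¹
          exact this.lintegral_lt_top
end

section
/- lim_{t→∞} (1/t) · log(‖m_t − γ‖_tv) = −2, where ‖m_t − γ‖_tv := ∫_ℝ max(f_t(x) − 1, 0) γ(dx) and f_t is the Radon–Nikodym derivative of m_t with respect to γ. (Paper's Lemma 27: the Ornstein–Uhlenbeck process started at 0 converges to equilibrium in total variation with exponential rate exactly 2.) -/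
open MeasureTheory ProbabilityTheory Real Filter

lemma ratio_eq (v : NNReal) (hv : (v:ℝ) ≠ 0) (x : ℝ) :
    gaussianPDFReal 0 v x / gaussianPDFReal 0 1 x
      = (1 / Real.sqrt v) * Real.exp (x^2/2 - x^2/(2*v)) := by
  have h2pi : (0:ℝ) ≤ 2 * π := by positivity
  have hs : Real.sqrt (2 * π * v) = Real.sqrt (2 * π) * Real.sqrt v := by
    rw [Real.sqrt_mul h2pi]
  have hsp : (0:ℝ) < Real.sqrt (2 * π) := Real.sqrt_pos.mpr (by positivity)
  have hvp : (0:ℝ) < v := lt_of_le_of_ne v.2 (Ne.symm hv)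
  have hsv : (0:ℝ) < Real.sqrt v := Real.sqrt_pos.mpr hvp
  simp only [gaussianPDFReal, sub_zero, NNReal.coe_one, mul_one]
  rw [hs, mul_div_mul_comm, ← Real.exp_sub]
  congr 1
  · field_simp
  · ring

lemma rnDeriv_gaussian (v : NNReal) (hv : v ≠ 0) :
    (fun x => ((gaussianReal 0 v).rnDeriv (gaussianReal 0 1) x).toReal)
      =ᵐ[gaussianReal 0 1]
    fun x => (1 / Real.sqrt v) * Real.exp (x^2/2 - x^2/(2*(v:ℝ))) := by
  have hmeas : AEMeasurable (gaussianPDF 0 1) volume :=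
    (measurable_gaussianPDF 0 1).aemeasurable
  have h0 : ∀ᵐ x ∂(volume : Measure ℝ), gaussianPDF 0 1 x ≠ 0 :=
    ae_of_all _ fun x => (gaussianPDF_pos 0 one_ne_zero x).ne'
  have htop : ∀ᵐ x ∂(volume : Measure ℝ), gaussianPDF 0 1 x ≠ ⊤ :=
    ae_of_all _ fun x => ENNReal.ofReal_ne_top
  have h1 := Measure.rnDeriv_withDensity_right (gaussianReal 0 v)
      (volume : Measure ℝ) hmeas h0 htop
  have h2 : (gaussianReal 0 v).rnDeriv volume =ᵐ[volume] gaussianPDF 0 v := by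
    rw [gaussianReal_of_var_ne_zero _ hv]
    exact Measure.rnDeriv_withDensity volume (measurable_gaussianPDF 0 v)
  rw [← gaussianReal_of_var_ne_zero 0 one_ne_zero] at h1
  have hae : (fun x => ((gaussianReal 0 v).rnDeriv (gaussianReal 0 1) x).toReal)
      =ᵐ[volume]
      fun x => (1 / Real.sqrt v) * Real.exp (x^2/2 - x^2/(2*(v:ℝ))) := by
    filter_upwards [h1, h2] with x hx1 hx2
    have hp1 : 0 < gaussianPDFReal 0 1 x := gaussianPDFReal_pos 0 1 x one_ne_zero
    have hpv : 0 ≤ gaussianPDFReal 0 v x := gaussianPDFReal_nonneg 0 v x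
    rw [hx1, hx2, gaussianPDF, gaussianPDF, ← ENNReal.ofReal_inv_of_pos hp1,
      ← ENNReal.ofReal_mul (inv_nonneg.mpr hp1.le),
      ENNReal.toReal_ofReal (mul_nonneg (inv_nonneg.mpr hp1.le) hpv)]
    rw [← div_eq_inv_mul, ratio_eq v (by exact_mod_cast hv) x]
  exact (gaussianReal_absolutelyContinuous 0 one_ne_zero).ae_eq hae

lemma up_bound {e : ℝ} (he : 0 < e) (he2 : e ≤ 1/2) :
    1 / Real.sqrt (1 - e) - 1 ≤ 2 * e := by
  have h1 : (0:ℝ) < 1 - e := by linarith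
  have hs : 0 < Real.sqrt (1-e) := Real.sqrt_pos.mpr h1
  have hsq : Real.sqrt (1-e)^2 = 1-e := Real.sq_sqrt h1.le
  have hs1 : Real.sqrt (1-e) ≤ 1 := by
    nlinarith
  rw [div_sub_one hs.ne', div_le_iff₀ hs]
  nlinarith

lemma low_bound {e x : ℝ} (he : 0 < e) (he2 : e ≤ 1/2) (hx : x^2 ≤ 1/4) :
    e/8 ≤ (1 / Real.sqrt (1 - e)) * Real.exp (x^2/2 - x^2/(2*(1-e))) - 1 := by
  have h1 : (0:ℝ) < 1 - e := by linarith
  have hs : 0 < Real.sqrt (1-e) := Real.sqrt_pos.mpr h1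
  have hsq : Real.sqrt (1-e)^2 = 1-e := Real.sq_sqrt h1.le
  have hx0 : 0 ≤ x^2 := sq_nonneg x
  -- exponent lower bound
  have hy : -(e/4) ≤ x^2/2 - x^2/(2*(1-e)) := by
    have heq : x^2/2 - x^2/(2*(1-e)) = -(x^2*e/(2*(1-e))) := by
      field_simp
      ring
    rw [heq, neg_le_neg_iff, div_le_iff₀ (by positivity : (0:ℝ) < 2*(1-e))]
    nlinarith
  have hexp : 1 - e/4 ≤ Real.exp (x^2/2 - x^2/(2*(1-e))) := by
    have := Real.add_one_le_exp (-(e/4))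
    have h2 := Real.exp_le_exp.mpr hy
    linarith
  -- 1/sqrt lower bound
  have hsle : Real.sqrt (1-e) ≤ 1/(1+e/2) := by
    rw [← Real.sqrt_sq (by positivity : (0:ℝ) ≤ 1/(1+e/2))]
    apply Real.sqrt_le_sqrt
    rw [div_pow, le_div_iff₀ (by positivity), one_pow]
    nlinarith [sq_nonneg e, mul_nonneg (sq_nonneg e) he.le]
  have hA : 1 + e/2 ≤ 1 / Real.sqrt (1-e) := by
    rw [le_div_iff₀ hs]
    calc (1+e/2) * Real.sqrt (1-e) ≤ (1+e/2) * (1/(1+e/2)) := by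
          apply mul_le_mul_of_nonneg_left hsle (by positivity)
      _ = 1 := by field_simp
  have hprod : (1+e/2) * (1 - e/4) ≤ (1 / Real.sqrt (1-e)) * Real.exp (x^2/2 - x^2/(2*(1-e))) :=
    mul_le_mul hA hexp (by linarith) (by positivity)
  nlinarith

noncomputable def gconst : ℝ := ((gaussianReal 0 1) (Set.Icc (-(1:ℝ)/2) (1/2))).toReal

lemma gconst_pos : 0 < gconst := by
  rw [gconst, gaussianReal_apply_eq_integral 0 one_ne_zero,
    ENNReal.toReal_ofReal (setIntegral_nonneg measurableSet_Icc
      (fun x _ => gaussianPDFReal_nonneg 0 1 x))]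
  rw [setIntegral_pos_iff_support_of_nonneg_ae
    (ae_of_all _ (fun x => gaussianPDFReal_nonneg 0 1 x))
    ((integrable_gaussianPDFReal 0 1).restrict)]
  have hsupp : Function.support (gaussianPDFReal 0 1) = Set.univ := by
    ext x
    simp [Function.mem_support, (gaussianPDFReal_pos 0 1 x one_ne_zero).ne']
  rw [hsupp, Set.univ_inter]
  rw [Real.volume_Icc]
  norm_num

lemma I_bounds {t : ℝ} (ht : 1 ≤ t) :
    gconst/8 * Real.exp (-2*t) ≤ (∫ x,
          max (((gaussianReal 0 (1 - Real.exp (-2 * t)).toNNReal).rnDeriv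
              (gaussianReal 0 1) x).toReal - 1) 0 ∂(gaussianReal 0 1)) ∧
    (∫ x,
          max (((gaussianReal 0 (1 - Real.exp (-2 * t)).toNNReal).rnDeriv
              (gaussianReal 0 1) x).toReal - 1) 0 ∂(gaussianReal 0 1))
      ≤ 2 * Real.exp (-2*t) := by
  set e := Real.exp (-2*t) with hedef
  have he : 0 < e := Real.exp_pos _
  have he2 : e ≤ 1/2 := by
    have h3 : (3:ℝ) ≤ Real.exp 2 := by
      have := Real.add_one_le_exp (2:ℝ); linarith
    have : e = (Real.exp (2*t))⁻¹ := by
      rw [hedef, ← Real.exp_neg]; ring_nf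
    rw [this]
    have h2t : (2:ℝ) ≤ 2*t := by linarith
    have : (2:ℝ) ≤ Real.exp (2*t) := le_trans (by linarith) (Real.exp_le_exp.mpr h2t)
    rw [inv_le_comm₀ (by linarith) (by norm_num)]
    linarith
  have h1e : (0:ℝ) < 1 - e := by linarith
  have hcoe : (((1 - e).toNNReal : NNReal) : ℝ) = 1 - e := Real.coe_toNNReal _ h1e.le
  have hv : (1 - e).toNNReal ≠ 0 := by
    simp only [ne_eq, Real.toNNReal_eq_zero, not_le]
    linarith
  set g : ℝ → ℝ :=
    fun x => max ((1/Real.sqrt (1-e)) * Real.exp (x^2/2 - x^2/(2*(1-e))) - 1) 0 with hgdef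
  have hae : (fun x => max (((gaussianReal 0 (1 - e).toNNReal).rnDeriv
        (gaussianReal 0 1) x).toReal - 1) 0) =ᵐ[gaussianReal 0 1] g := by
    filter_upwards [rnDeriv_gaussian _ hv] with x hx
    rw [hgdef]
    simp only
    rw [hx, hcoe]
  have hI : (∫ x, max (((gaussianReal 0 (1 - e).toNNReal).rnDeriv
        (gaussianReal 0 1) x).toReal - 1) 0 ∂(gaussianReal 0 1)) = ∫ x, g x ∂(gaussianReal 0 1) :=
    integral_congr_ae hae
  rw [hI]
  have hs : 0 < Real.sqrt (1-e) := Real.sqrt_pos.mpr h1e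
  have hsq : Real.sqrt (1-e)^2 = 1-e := Real.sq_sqrt h1e.le
  have hsle1 : Real.sqrt (1-e) ≤ 1 := by nlinarith [Real.sqrt_nonneg (1-e)]
  have hC : ∀ x, g x ≤ 1/Real.sqrt (1-e) - 1 := by
    intro x
    apply max_le
    · have hexp : Real.exp (x^2/2 - x^2/(2*(1-e))) ≤ 1 := by
        rw [Real.exp_le_one_iff, sub_nonpos]
        exact div_le_div_of_nonneg_left (sq_nonneg x) (by linarith) (by linarith)
      have := mul_le_mul_of_nonneg_left hexp (by positivity : (0:ℝ) ≤ 1/Real.sqrt (1-e))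
      linarith
    · rw [sub_nonneg]
      exact one_le_one_div hs hsle1
  have hg0 : ∀ x, 0 ≤ g x := fun x => le_max_right _ _
  have hgcont : Continuous g := by
    apply Continuous.max _ continuous_const
    apply Continuous.sub _ continuous_const
    exact continuous_const.mul (Continuous.rexp (by continuity))
  have hgi : Integrable g (gaussianReal 0 1) := by
    refine Integrable.mono' (integrable_const (1/Real.sqrt (1-e) - 1))
      hgcont.aestronglyMeasurable (ae_of_all _ fun x => ?_)
    rw [Real.norm_eq_abs, abs_of_nonneg (hg0 x)]
    exact hC x
  constructor
  · have hIcc : ∫ x in Set.Icc (-(1:ℝ)/2) (1/2), (e/8) ∂(gaussianReal 0 1)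
        ≤ ∫ x in Set.Icc (-(1:ℝ)/2) (1/2), g x ∂(gaussianReal 0 1) := by
      refine setIntegral_mono_on (integrableOn_const (measure_lt_top _ _).ne)
        hgi.integrableOn measurableSet_Icc fun x hx => ?_
      obtain ⟨hx1, hx2⟩ := hx
      have hx4 : x^2 ≤ 1/4 := by nlinarith
      exact le_trans (low_bound he he2 hx4) (le_max_left _ _)
    have h2 : ∫ x in Set.Icc (-(1:ℝ)/2) (1/2), g x ∂(gaussianReal 0 1)
        ≤ ∫ x, g x ∂(gaussianReal 0 1) :=
      setIntegral_le_integral hgi (ae_of_all _ hg0)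
    rw [setIntegral_const, smul_eq_mul] at hIcc
    have : gconst/8 * e = ((gaussianReal 0 1) (Set.Icc (-(1:ℝ)/2) (1/2))).toReal * (e/8) := by
      rw [gconst]; ring
    rw [this]
    exact le_trans hIcc h2
  · calc ∫ x, g x ∂(gaussianReal 0 1)
        ≤ ∫ _, (1/Real.sqrt (1-e) - 1) ∂(gaussianReal 0 1) :=
          integral_mono hgi (integrable_const _) hC
      _ = 1/Real.sqrt (1-e) - 1 := by simp
      _ ≤ 2 * e := up_bound he he2

/-- Lemma 27: the Ornstein–Uhlenbeck process started at `0` converges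
to equilibrium in total variation with exponential rate exactly `2`:
`lim_{t→∞} (1/t) log ‖m_t − γ‖_tv = −2`, where `m_t` is the centered Gaussian of
variance `1 − e^{−2t}`, `γ` is the standard Gaussian, and
`‖m_t − γ‖_tv = ∫ max(f_t − 1, 0) dγ` with `f_t = dm_t/dγ`. -/
theorem ou_total_variation_rate :
    Tendsto (fun t : ℝ =>
        (1 / t) * Real.log (∫ x,
          max (((gaussianReal 0 (1 - Real.exp (-2 * t)).toNNReal).rnDeriv
              (gaussianReal 0 1) x).toReal - 1) 0 ∂(gaussianReal 0 1)))
      atTop (nhds (-2)) := by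
  have hK : ∀ K : ℝ, Tendsto (fun t : ℝ => K/t - 2) atTop (nhds (-2)) := by
    intro K
    have h1 : Tendsto (fun t : ℝ => K/t) atTop (nhds 0) :=
      Tendsto.div_atTop tendsto_const_nhds tendsto_id
    have h2 := h1.sub (tendsto_const_nhds (x := (2:ℝ)))
    simpa using h2
  refine tendsto_of_tendsto_of_tendsto_of_le_of_le'
    (hK (Real.log (gconst/8))) (hK (Real.log 2)) ?_ ?_
  · filter_upwards [eventually_ge_atTop (1:ℝ)] with t ht
    have ht0 : (0:ℝ) < t := lt_of_lt_of_le one_pos ht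
    obtain ⟨hlo, hup⟩ := I_bounds ht
    set I := ∫ x, max (((gaussianReal 0 (1 - Real.exp (-2 * t)).toNNReal).rnDeriv
              (gaussianReal 0 1) x).toReal - 1) 0 ∂(gaussianReal 0 1)
    have hc8 : (0:ℝ) < gconst/8 := by have := gconst_pos; linarith
    have hlopos : (0:ℝ) < gconst/8 * Real.exp (-2*t) := by positivity
    have hlog : Real.log (gconst/8) - 2*t ≤ Real.log I := by
      have h1 : Real.log (gconst/8 * Real.exp (-2*t)) ≤ Real.log I :=
        Real.log_le_log hlopos hlo
      rw [Real.log_mul hc8.ne' (Real.exp_ne_zero _), Real.log_exp] at h1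
      linarith
    have := mul_le_mul_of_nonneg_left hlog (le_of_lt (one_div_pos.mpr ht0))
    calc Real.log (gconst/8) / t - 2 = (1/t) * (Real.log (gconst/8) - 2*t) := by
          field_simp
      _ ≤ (1/t) * Real.log I := this
  · filter_upwards [eventually_ge_atTop (1:ℝ)] with t ht
    have ht0 : (0:ℝ) < t := lt_of_lt_of_le one_pos ht
    obtain ⟨hlo, hup⟩ := I_bounds ht
    set I := ∫ x, max (((gaussianReal 0 (1 - Real.exp (-2 * t)).toNNReal).rnDeriv
              (gaussianReal 0 1) x).toReal - 1) 0 ∂(gaussianReal 0 1)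
    have hc8 : (0:ℝ) < gconst/8 := by have := gconst_pos; linarith
    have hIpos : (0:ℝ) < I := lt_of_lt_of_le (by positivity) hlo
    have hlog : Real.log I ≤ Real.log 2 - 2*t := by
      have h1 : Real.log I ≤ Real.log (2 * Real.exp (-2*t)) :=
        Real.log_le_log hIpos hup
      rw [Real.log_mul two_ne_zero (Real.exp_ne_zero _), Real.log_exp] at h1
      linarith
    have := mul_le_mul_of_nonneg_left hlog (le_of_lt (one_div_pos.mpr ht0))
    calc (1/t) * Real.log I ≤ (1/t) * (Real.log 2 - 2*t) := this
      _ = Real.log 2 / t - 2 := by field_simp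
end

section
/- lim_{t→∞} e^{2t} · ∫_ℝ max(f_t(x) − 1, 0) γ(dx) = ∫_0^1 (1 − x²) γ(dx) = (1/√(2π)) ∫_0^1 (1 − x²) e^{−x²/2} dx, where f_t(x) := (1 − e^{−2t})^{−1/2} · exp(−e^{−2t} x² / (2(1 − e^{−2t}))). (The precise total-variation asymptotic proved in Lemma 27.) -/
open MeasureTheory ProbabilityTheory Real Filter Set
open scoped ENNReal NNReal Topology

lemma gaussPDF01 (x : ℝ) : gaussianPDFReal 0 1 x = (Real.sqrt (2*π))⁻¹ * Real.exp (-x^2/2) := by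
  simp [gaussianPDFReal]

lemma gauss_set_integral (g : ℝ → ℝ) {s : Set ℝ} (hs : MeasurableSet s) :
    ∫ x in s, g x ∂(gaussianReal 0 1) =
      ∫ x in s, (Real.sqrt (2*π))⁻¹ * Real.exp (-x^2/2) * g x := by
  rw [gaussianReal_of_var_ne_zero 0 one_ne_zero, gaussianPDF_def]
  have h : (fun x => ENNReal.ofReal (gaussianPDFReal 0 1 x))
      = fun x => ((Real.toNNReal (gaussianPDFReal 0 1 x) : ℝ≥0) : ℝ≥0∞) := rfl
  rw [h, restrict_withDensity hs,
    integral_withDensity_eq_integral_smul ((measurable_gaussianPDFReal 0 1).real_toNNReal) g]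
  congr 1; ext x
  rw [NNReal.smul_def, smul_eq_mul, Real.coe_toNNReal _ (gaussianPDFReal_nonneg 0 1 x), gaussPDF01]

lemma hasDeriv_g (x : ℝ) :
    HasDerivAt (fun ε : ℝ => (1-ε) ^ (-(1:ℝ)/2) * Real.exp (-(ε * x^2)/(2*(1-ε))))
      ((1 - x^2)/2) 0 := by
  have h1 : HasDerivAt (fun ε : ℝ => (1:ℝ)-ε) (-1) 0 := (hasDerivAt_id 0).const_sub 1
  have h2 : HasDerivAt (fun ε : ℝ => (1-ε) ^ (-(1:ℝ)/2)) (1/2) 0 := by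
    have := h1.rpow_const (p := -(1:ℝ)/2) (Or.inl (by norm_num))
    convert this using 1
    norm_num
  have h3 : HasDerivAt (fun ε : ℝ => -(ε * x^2)/(2*(1-ε))) (-x^2/2) 0 := by
    have hn : HasDerivAt (fun ε : ℝ => -(ε * x^2)) (-x^2) 0 :=
      by simpa using ((hasDerivAt_id' (0:ℝ)).mul_const (x^2)).fun_neg
    have hd : HasDerivAt (fun ε : ℝ => 2*(1-ε)) (-2) 0 := by
      have := h1.const_mul 2; exact this.congr_deriv (by ring)
    have := hn.div hd (by norm_num)
    refine this.congr_deriv ?_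
    norm_num
    ring
  have h4 := h3.exp
  have h5 := h2.mul h4
  refine h5.congr_deriv ?_
  norm_num [Real.exp_zero]
  ring

lemma ptwise (x : ℝ) :
    Tendsto (fun t : ℝ => Real.exp (2 * t) *
        max ((1 - Real.exp (-2 * t)) ^ (-(1 : ℝ) / 2) *
          Real.exp (-(Real.exp (-2 * t) * x ^ 2) / (2 * (1 - Real.exp (-2 * t)))) - 1) 0)
      atTop (𝓝 (max ((1 - x^2)/2) 0)) := by
  set g := fun ε : ℝ => (1-ε) ^ (-(1:ℝ)/2) * Real.exp (-(ε * x^2)/(2*(1-ε))) with hgdef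
  have hg0 : g 0 = 1 := by simp [hgdef]
  have hslope : Tendsto (fun ε => (g ε - 1)/ε) (𝓝[≠] (0:ℝ)) (𝓝 ((1-x^2)/2)) := by
    have h := hasDerivAt_iff_tendsto_slope.mp (hasDeriv_g x)
    have heq : (fun ε => (g ε - 1)/ε) = slope g 0 := by
      funext ε; rw [slope_def_field]; simp [hg0]
    rw [heq]; exact h
  have hexp : Tendsto (fun t : ℝ => Real.exp (-2*t)) atTop (𝓝[≠] (0:ℝ)) := by
    have h1 : Tendsto (fun t : ℝ => Real.exp (-2*t)) atTop (𝓝 0) := by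
      apply Real.tendsto_exp_atBot.comp
      exact Tendsto.const_mul_atTop_of_neg (by norm_num) tendsto_id
    refine tendsto_nhdsWithin_of_tendsto_nhds_of_eventually_within _ h1 ?_
    filter_upwards with t using (Real.exp_pos _).ne'
  have hcomp : Tendsto (fun t : ℝ => max ((g (Real.exp (-2*t)) - 1)/Real.exp (-2*t)) 0)
      atTop (𝓝 (max ((1-x^2)/2) 0)) :=
    (hslope.comp hexp).max tendsto_const_nhds
  have hfun : (fun t : ℝ => Real.exp (2 * t) *
        max ((1 - Real.exp (-2 * t)) ^ (-(1 : ℝ) / 2) *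
          Real.exp (-(Real.exp (-2 * t) * x ^ 2) / (2 * (1 - Real.exp (-2 * t)))) - 1) 0)
      = fun t : ℝ => max ((g (Real.exp (-2*t)) - 1)/Real.exp (-2*t)) 0 := by
    funext t
    have he : Real.exp (2*t) = (Real.exp (-2*t))⁻¹ := by
      rw [← Real.exp_neg]; ring_nf
    rw [he, mul_max_of_nonneg _ _ (inv_nonneg.2 (Real.exp_pos _).le), mul_zero,
      inv_mul_eq_div]
  rw [hfun]
  exact hcomp

lemma bound_aux {ε : ℝ} (h0 : 0 < ε) (h2 : ε ≤ 1/2) (x : ℝ) :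
    (1-ε) ^ (-(1:ℝ)/2) * Real.exp (-(ε * x^2)/(2*(1-ε))) - 1 ≤ 2*ε := by
  have h1 : (0:ℝ) < 1 - ε := by linarith
  have hrp : (1-ε) ^ (-(1:ℝ)/2) = (Real.sqrt (1-ε))⁻¹ := by
    rw [Real.sqrt_eq_rpow, ← Real.rpow_neg h1.le]
    norm_num
  have hexp1 : Real.exp (-(ε * x^2)/(2*(1-ε))) ≤ 1 := by
    rw [Real.exp_le_one_iff]
    apply div_nonpos_of_nonpos_of_nonneg
    · nlinarith [sq_nonneg x]
    · linarith
  have hs : Real.sqrt (1-ε) ^ 2 = 1 - ε := Real.sq_sqrt h1.le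
  have hs0 : 0 < Real.sqrt (1-ε) := Real.sqrt_pos.2 h1
  have key : 1 ≤ (1 + 2*ε) * Real.sqrt (1-ε) := by
    nlinarith [hs, hs0, sq_nonneg (Real.sqrt (1-ε) - 1), sq_nonneg ((1+2*ε) * Real.sqrt (1-ε) - 1)]
  have hinv : (Real.sqrt (1-ε))⁻¹ ≤ 1 + 2*ε := by
    rw [inv_eq_one_div, div_le_iff₀ hs0]
    linarith
  have hpos : (0:ℝ) ≤ (1-ε) ^ (-(1:ℝ)/2) := by positivity
  calc (1-ε) ^ (-(1:ℝ)/2) * Real.exp (-(ε * x^2)/(2*(1-ε))) - 1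
      ≤ (1-ε) ^ (-(1:ℝ)/2) * 1 - 1 := by nlinarith
    _ ≤ (1 + 2*ε) - 1 := by rw [mul_one, hrp]; linarith
    _ = 2*ε := by ring

lemma part2 : (∫ x in Ioc (0:ℝ) 1, (1 - x ^ 2) ∂(gaussianReal 0 1))
      = (1 / Real.sqrt (2 * Real.pi)) *
          ∫ x in (0:ℝ)..1, (1 - x ^ 2) * Real.exp (-x ^ 2 / 2) := by
  rw [gauss_set_integral _ measurableSet_Ioc,
    ← intervalIntegral.integral_of_le (by norm_num : (0:ℝ) ≤ 1)]
  rw [show (fun x : ℝ => (Real.sqrt (2*π))⁻¹ * Real.exp (-x^2/2) * (1 - x^2))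
      = fun x : ℝ => (Real.sqrt (2*π))⁻¹ * ((1 - x^2) * Real.exp (-x^2/2)) by
        funext x; ring]
  rw [intervalIntegral.integral_const_mul, one_div]

lemma max_ind' (x : ℝ) : max ((1-x^2)/2) 0
    = Set.indicator (Ioc (-1:ℝ) 1) (fun y => (1-y^2)/2) x := by
  by_cases hx : x ∈ Ioc (-1:ℝ) 1
  · rw [indicator_of_mem hx]
    exact max_eq_left (by nlinarith [hx.1, hx.2])
  · rw [indicator_of_notMem hx]
    simp only [mem_Ioc, not_and_or, not_lt, not_le] at hx
    refine max_eq_right ?_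
    rcases hx with h | h
    · nlinarith
    · nlinarith

lemma hI : ∫ x, max ((1-x^2)/2) 0 ∂(gaussianReal 0 1)
    = ∫ x in Ioc (0:ℝ) 1, (1 - x ^ 2) ∂(gaussianReal 0 1) := by
  set φ : ℝ → ℝ := fun x => (Real.sqrt (2*π))⁻¹ * Real.exp (-x^2/2) * ((1-x^2)/2) with hφ
  have hφc : Continuous φ := by
    apply Continuous.mul
    · exact continuous_const.mul (Real.continuous_exp.comp (by continuity))
    · continuity
  have h1 : ∫ x, max ((1-x^2)/2) 0 ∂(gaussianReal 0 1)
      = ∫ x in Ioc (-1:ℝ) 1, (1-x^2)/2 ∂(gaussianReal 0 1) := by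
    rw [← integral_indicator measurableSet_Ioc]
    exact integral_congr_ae (Filter.Eventually.of_forall max_ind')
  rw [h1, gauss_set_integral _ measurableSet_Ioc, gauss_set_integral _ measurableSet_Ioc]
  have h2 : ∫ x in Ioc (-1:ℝ) 1, φ x = ∫ x in (-1:ℝ)..1, φ x :=
    (intervalIntegral.integral_of_le (by norm_num)).symm
  have h3 : ∫ x in (-1:ℝ)..0, φ x = ∫ x in (0:ℝ)..1, φ x := by
    have he : ∀ y : ℝ, φ (-y) = φ y := by intro y; simp [hφ]
    calc ∫ x in (-1:ℝ)..0, φ x = ∫ x in (-1:ℝ)..(-0), φ x := by norm_num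
      _ = ∫ x in (0:ℝ)..1, φ (-x) := (intervalIntegral.integral_comp_neg φ).symm
      _ = ∫ x in (0:ℝ)..1, φ x := by
          exact intervalIntegral.integral_congr (fun x _ => he x)
  have h4 : (∫ x in (-1:ℝ)..0, φ x) + ∫ x in (0:ℝ)..1, φ x = ∫ x in (-1:ℝ)..1, φ x :=
    intervalIntegral.integral_add_adjacent_intervals
      (hφc.intervalIntegrable (μ := volume) (-1) 0) (hφc.intervalIntegrable (μ := volume) 0 1)
  have h5 : ∫ x in Ioc (-1:ℝ) 1, φ x = 2 * ∫ x in (0:ℝ)..1, φ x := by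
    rw [h2, ← h4, h3]; ring
  show ∫ x in Ioc (-1:ℝ) 1, φ x = _
  rw [h5, ← intervalIntegral.integral_of_le (by norm_num : (0:ℝ) ≤ 1),
    ← intervalIntegral.integral_const_mul]
  apply intervalIntegral.integral_congr
  intro x _
  simp only [hφ]
  ring

/-- the precise total-variation asymptotic of Lemma 27:
`e^{2t} ∫ max(f_t − 1, 0) dγ → ∫_0^1 (1 − x²) γ(dx) = (2π)^{−1/2} ∫_0^1 (1 − x²) e^{−x²/2} dx`. -/
theorem ou_total_variation_asymptotic :
    Tendsto (fun t : ℝ => Real.exp (2 * t) *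
        ∫ x, max ((1 - Real.exp (-2 * t)) ^ (-(1 : ℝ) / 2) *
            Real.exp (-(Real.exp (-2 * t) * x ^ 2) / (2 * (1 - Real.exp (-2 * t)))) - 1) 0
          ∂(gaussianReal 0 1))
      atTop (nhds (∫ x in Ioc (0:ℝ) 1, (1 - x ^ 2) ∂(gaussianReal 0 1))) ∧
    (∫ x in Ioc (0:ℝ) 1, (1 - x ^ 2) ∂(gaussianReal 0 1))
      = (1 / Real.sqrt (2 * Real.pi)) *
          ∫ x in (0:ℝ)..1, (1 - x ^ 2) * Real.exp (-x ^ 2 / 2) := by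
  refine ⟨?_, part2⟩
  have heq : (fun t : ℝ => Real.exp (2 * t) *
        ∫ x, max ((1 - Real.exp (-2 * t)) ^ (-(1 : ℝ) / 2) *
            Real.exp (-(Real.exp (-2 * t) * x ^ 2) / (2 * (1 - Real.exp (-2 * t)))) - 1) 0
          ∂(gaussianReal 0 1))
      = fun t : ℝ => ∫ x, Real.exp (2 * t) *
          max ((1 - Real.exp (-2 * t)) ^ (-(1 : ℝ) / 2) *
            Real.exp (-(Real.exp (-2 * t) * x ^ 2) / (2 * (1 - Real.exp (-2 * t)))) - 1) 0
          ∂(gaussianReal 0 1) := by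
    funext t
    rw [integral_const_mul]
  rw [heq, ← hI]
  refine tendsto_integral_filter_of_dominated_convergence (fun _ => (2:ℝ)) ?_ ?_
    (integrable_const 2) (Eventually.of_forall ptwise)
  · filter_upwards with t
    apply Continuous.aestronglyMeasurable
    apply continuous_const.mul
    apply Continuous.max _ continuous_const
    apply Continuous.sub _ continuous_const
    apply continuous_const.mul
    apply Real.continuous_exp.comp
    continuity
  · filter_upwards [eventually_ge_atTop (1:ℝ)] with t ht
    refine ae_of_all _ fun x => ?_
    set ε := Real.exp (-2*t) with hε
    have hε0 : 0 < ε := Real.exp_pos _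
    have hεle : ε ≤ 1/2 := by
      have h1 : Real.exp (-2*t) ≤ Real.exp (-2) := Real.exp_le_exp.2 (by linarith)
      have h3 : (2:ℝ) ≤ Real.exp 2 := by nlinarith [Real.add_one_le_exp (2:ℝ)]
      have h4 : Real.exp (-2:ℝ) ≤ 1/2 := by
        rw [Real.exp_neg]
        rw [show (1:ℝ)/2 = 2⁻¹ by norm_num]
        exact inv_anti₀ (by norm_num) h3
      linarith
    have hb := bound_aux hε0 hεle x
    have hmax : max ((1 - ε) ^ (-(1 : ℝ) / 2) *
        Real.exp (-(ε * x ^ 2) / (2 * (1 - ε))) - 1) 0 ≤ 2*ε := by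
      apply max_le _ (by positivity)
      convert hb using 3 <;> norm_num
    have hnn : 0 ≤ max ((1 - ε) ^ (-(1 : ℝ) / 2) *
        Real.exp (-(ε * x ^ 2) / (2 * (1 - ε))) - 1) 0 := le_max_right _ _
    have he1 : Real.exp (2*t) * ε = 1 := by
      rw [hε, ← Real.exp_add]; norm_num
    rw [Real.norm_eq_abs, abs_of_nonneg (mul_nonneg (Real.exp_pos _).le hnn)]
    calc Real.exp (2*t) * max ((1 - ε) ^ (-(1 : ℝ) / 2) *
          Real.exp (-(ε * x ^ 2) / (2 * (1 - ε))) - 1) 0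
        ≤ Real.exp (2*t) * (2*ε) := by
          exact mul_le_mul_of_nonneg_left hmax (Real.exp_pos _).le
      _ = 2 := by rw [show Real.exp (2*t) * (2*ε) = 2*(Real.exp (2*t) * ε) by ring, he1]; ring
end

section
/- Fix an integer n ≥ 1 and define, for y > 0, F(y) := −H_{2n−1}(y) e^{−y²/2} / (∫_0^y e^{−u²/2} du). Then for every y > 0: F''(y) + (y + 2 e^{−y²/2}/(∫_0^y e^{−u²/2} du)) · F'(y) + 2n · F(y) = 0. In other words, F is an eigenfunction with eigenvalue −2n of the dual generator L† := ∂² + V' ∂, where V(y) := y²/2 + 2 log γ([0,y]). (The eigenfunction assertion of Lemma 31.) -/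
open MeasureTheory Real Polynomial

lemma derivative_hermite_succ (k : ℕ) :
    derivative (hermite (k+1)) = (k+1 : ℕ) * hermite k := by
  induction k with
  | zero => simp [hermite_one, hermite_zero]
  | succ k ih =>
    rw [hermite_succ (k+1), derivative_sub, derivative_mul, derivative_X, ih,
      derivative_mul, derivative_natCast, hermite_succ k]
    push_cast
    ring

lemma gauss_deriv (y : ℝ) :
    HasDerivAt (fun x : ℝ => Real.exp (-x^2/2)) (Real.exp (-y^2/2) * (-y)) y := by
  have h3 : HasDerivAt (fun x : ℝ => -x^2/2) (-y) y := by
    have := ((hasDerivAt_pow 2 y).neg.div_const 2)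
    refine this.congr_deriv ?_
    ring
  exact h3.exp

lemma herm_gauss_deriv (m : ℕ) (y : ℝ) :
    HasDerivAt (fun x : ℝ => (aeval x (hermite m) : ℝ) * Real.exp (-x^2/2))
      (-(aeval y (hermite (m+1))) * Real.exp (-y^2/2)) y := by
  have h1 := Polynomial.hasDerivAt_aeval (q := hermite m) y
  have := h1.mul (gauss_deriv y)
  refine this.congr_deriv ?_
  rw [hermite_succ]
  simp
  ring

lemma G_hasDeriv (y : ℝ) :
    HasDerivAt (fun x : ℝ => ∫ u in (0:ℝ)..x, Real.exp (-u^2/2)) (Real.exp (-y^2/2)) y := by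
  have hc : Continuous fun u : ℝ => Real.exp (-u^2/2) := by continuity
  exact intervalIntegral.integral_hasDerivAt_right (hc.intervalIntegrable _ _)
    (hc.stronglyMeasurableAtFilter _ _) hc.continuousAt

lemma G_pos {y : ℝ} (hy : 0 < y) : 0 < ∫ u in (0:ℝ)..y, Real.exp (-u^2/2) := by
  have hc : Continuous fun u : ℝ => Real.exp (-u^2/2) := by continuity
  exact intervalIntegral.intervalIntegral_pos_of_pos (hc.intervalIntegrable _ _)
    (fun u => Real.exp_pos _) hy

lemma Fd1 (m : ℕ) {x : ℝ} (hx : 0 < x) :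
    HasDerivAt (fun t : ℝ => -(aeval t (hermite m) : ℝ) * Real.exp (-t^2/2)
        / ∫ u in (0:ℝ)..t, Real.exp (-u^2/2))
      ((aeval x (hermite (m+1)) * Real.exp (-x^2/2) * (∫ u in (0:ℝ)..x, Real.exp (-u^2/2))
        + aeval x (hermite m) * Real.exp (-x^2/2)^2)
        / (∫ u in (0:ℝ)..x, Real.exp (-u^2/2))^2) x := by
  have hnum : HasDerivAt (fun t : ℝ => -(aeval t (hermite m) : ℝ) * Real.exp (-t^2/2))
      (aeval x (hermite (m+1)) * Real.exp (-x^2/2)) x := by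
    have h := (herm_gauss_deriv m x).neg
    have he : (fun t : ℝ => -(aeval t (hermite m) : ℝ) * Real.exp (-t^2/2))
        = fun t : ℝ => -((aeval t (hermite m) : ℝ) * Real.exp (-t^2/2)) := by
      funext t; ring
    rw [he]
    refine h.congr_deriv ?_
    ring
  have := hnum.div (G_hasDeriv x) (ne_of_gt (G_pos hx))
  refine this.congr_deriv ?_
  ring

lemma Fd2 (m : ℕ) {x : ℝ} (hx : 0 < x) :
    HasDerivAt (fun t : ℝ =>
        (aeval t (hermite (m+1)) * Real.exp (-t^2/2) * (∫ u in (0:ℝ)..t, Real.exp (-u^2/2))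
          + aeval t (hermite m) * Real.exp (-t^2/2)^2)
          / (∫ u in (0:ℝ)..t, Real.exp (-u^2/2))^2)
      ((-(aeval x (hermite (m+2))) * Real.exp (-x^2/2) * (∫ u in (0:ℝ)..x, Real.exp (-u^2/2))^2
        - x * aeval x (hermite m) * Real.exp (-x^2/2)^2 * (∫ u in (0:ℝ)..x, Real.exp (-u^2/2))
        - 2 * aeval x (hermite (m+1)) * Real.exp (-x^2/2)^2 * (∫ u in (0:ℝ)..x, Real.exp (-u^2/2))
        - 2 * aeval x (hermite m) * Real.exp (-x^2/2)^3)
        / (∫ u in (0:ℝ)..x, Real.exp (-u^2/2))^3) x := by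
  have hG := G_hasDeriv x
  have hGne := ne_of_gt (G_pos hx)
  have hQ := (herm_gauss_deriv (m+1) x).mul hG
  have hP0 := (herm_gauss_deriv m x).mul (gauss_deriv x)
  have he : (fun t : ℝ => (aeval t (hermite m) : ℝ) * Real.exp (-t^2/2)^2)
      = fun t : ℝ => ((aeval t (hermite m) : ℝ) * Real.exp (-t^2/2)) * Real.exp (-t^2/2) := by
    funext t; ring
  have hP : HasDerivAt (fun t : ℝ => (aeval t (hermite m) : ℝ) * Real.exp (-t^2/2)^2)
      (-(aeval x (hermite (m+1))) * Real.exp (-x^2/2) * Real.exp (-x^2/2)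
        + (aeval x (hermite m) * Real.exp (-x^2/2)) * (Real.exp (-x^2/2) * (-x))) x := by
    rw [he]; exact hP0
  have hnum := hQ.add hP
  have hden : HasDerivAt (fun t : ℝ => (∫ u in (0:ℝ)..t, Real.exp (-u^2/2))^2)
      (2 * (∫ u in (0:ℝ)..x, Real.exp (-u^2/2))^1 * Real.exp (-x^2/2)) x := hG.pow 2
  have := hnum.div hden (pow_ne_zero 2 hGne)
  refine this.congr_deriv ?_
  simp only [Pi.add_apply, Pi.mul_apply]
  have hGne' : (∫ u in (0:ℝ)..x, Real.exp (-(u ^ 2 / 2))) ≠ 0 := by simpa [neg_div] using hGne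
  field_simp
  ring

/-- eigenfunction assertion of Lemma 31: for `n ≥ 1`, the function
`F(y) = −H_{2n−1}(y) e^{−y²/2} / ∫_0^y e^{−u²/2} du` satisfies, for every `y > 0`,
`F'' + (y + 2e^{−y²/2}/∫_0^y e^{−u²/2} du) F' + 2n F = 0`, i.e. it is an eigenfunction
with eigenvalue `−2n` of the dual generator `L† = ∂² + V'∂`. -/
theorem dual_eigenfunction (n : ℕ) (hn : 1 ≤ n)
    (F : ℝ → ℝ)
    (hF : ∀ y : ℝ, 0 < y →
      F y = -(Polynomial.aeval y (Polynomial.hermite (2 * n - 1))) * Real.exp (-y ^ 2 / 2)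
              / ∫ u in (0:ℝ)..y, Real.exp (-u ^ 2 / 2)) :
    ∀ y : ℝ, 0 < y →
      deriv (deriv F) y
        + (y + 2 * Real.exp (-y ^ 2 / 2) / ∫ u in (0:ℝ)..y, Real.exp (-u ^ 2 / 2))
            * deriv F y
        + 2 * n * F y = 0 := by
  intro y hy
  set m := 2 * n - 1 with hm
  have key1 : ∀ x : ℝ, 0 < x → deriv F x =
      (aeval x (hermite (m+1)) * Real.exp (-x^2/2) * (∫ u in (0:ℝ)..x, Real.exp (-u^2/2))
        + aeval x (hermite m) * Real.exp (-x^2/2)^2)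
        / (∫ u in (0:ℝ)..x, Real.exp (-u^2/2))^2 := by
    intro x hx
    have heq : F =ᶠ[nhds x] (fun t : ℝ => -(aeval t (hermite m) : ℝ) * Real.exp (-t^2/2)
        / ∫ u in (0:ℝ)..t, Real.exp (-u^2/2)) :=
      Filter.eventuallyEq_of_mem (Ioi_mem_nhds hx) (fun t ht => by
        simpa using hF t ht)
    rw [heq.deriv_eq, (Fd1 m hx).deriv]
  have key2 : deriv (deriv F) y =
      (-(aeval y (hermite (m+2))) * Real.exp (-y^2/2) * (∫ u in (0:ℝ)..y, Real.exp (-u^2/2))^2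
        - y * aeval y (hermite m) * Real.exp (-y^2/2)^2 * (∫ u in (0:ℝ)..y, Real.exp (-u^2/2))
        - 2 * aeval y (hermite (m+1)) * Real.exp (-y^2/2)^2 * (∫ u in (0:ℝ)..y, Real.exp (-u^2/2))
        - 2 * aeval y (hermite m) * Real.exp (-y^2/2)^3)
        / (∫ u in (0:ℝ)..y, Real.exp (-u^2/2))^3 := by
    have heq : deriv F =ᶠ[nhds y] (fun t : ℝ =>
        (aeval t (hermite (m+1)) * Real.exp (-t^2/2) * (∫ u in (0:ℝ)..t, Real.exp (-u^2/2))
          + aeval t (hermite m) * Real.exp (-t^2/2)^2)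
          / (∫ u in (0:ℝ)..t, Real.exp (-u^2/2))^2) :=
      Filter.eventuallyEq_of_mem (Ioi_mem_nhds hy) (fun t ht => key1 t ht)
    rw [heq.deriv_eq, (Fd2 m hy).deriv]
  have hrec : (aeval y (hermite (m+2)) : ℝ)
      = y * aeval y (hermite (m+1)) - (2*(n:ℝ)) * aeval y (hermite m) := by
    have h1 : hermite (m+2) = X * hermite (m+1) - derivative (hermite (m+1)) := hermite_succ _
    have h2 : (m + 1 : ℕ) = 2 * n := by omega
    rw [h1, derivative_hermite_succ]
    simp only [map_sub, map_mul, aeval_X, map_natCast, h2]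
    push_cast
    ring
  have hGne := ne_of_gt (G_pos hy)
  rw [key2, key1 y hy, hF y hy, hrec]
  have hGne' : (∫ u in (0:ℝ)..y, Real.exp (-(u ^ 2 / 2))) ≠ 0 := by simpa [neg_div] using hGne
  field_simp
  ring
end

section
/- lim_{M→∞} (∫_{−M}^M y² e^{−y²/2} dy) / (∫_{−M}^M (e^{−y²/2} − e^{−M²/2})² e^{y²/2} dy) = 1. (The computation of the Rayleigh quotient of the test function f_M(y) := e^{−y²/2} − e^{−M²/2} in the proof of Lemma 39: note f_M'(y)² e^{y²/2} = y² e^{−y²/2}.) -/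
open MeasureTheory Real Filter

lemma rq_integrable : Integrable (fun y : ℝ => Real.exp (-y ^ 2 / 2)) := by
  have := integrable_exp_neg_mul_sq (b := (1/2 : ℝ)) (by norm_num)
  convert this using 2 with y
  ring_nf

lemma rq_num_eq (M : ℝ) :
    (∫ y in (-M)..M, y ^ 2 * Real.exp (-y ^ 2 / 2)) =
      (∫ y in (-M)..M, Real.exp (-y ^ 2 / 2)) - 2 * M * Real.exp (-M ^ 2 / 2) := by
  have hderiv : ∀ x ∈ Set.uIcc (-M) M,
      HasDerivAt (fun x : ℝ => -x * Real.exp (-x ^ 2 / 2))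
        ((x ^ 2 - 1) * Real.exp (-x ^ 2 / 2)) x := by
    intro x _
    have h1 : HasDerivAt (fun x : ℝ => -x ^ 2 / 2) (-x) x := by
      have := ((hasDerivAt_pow 2 x).div_const 2).neg
      have e : (fun x : ℝ => -x ^ 2 / 2) = -fun x => x ^ 2 / 2 := by
        ext t; simp only [Pi.neg_apply]; ring
      rw [e]; exact this.congr_deriv (by push_cast; ring)
    have h2 := h1.exp
    have h3 := ((hasDerivAt_id x).neg).mul h2
    have e : (fun x : ℝ => -x * Real.exp (-x ^ 2 / 2)) = (-id * fun x => Real.exp (-x ^ 2 / 2)) := by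
      ext t; simp only [Pi.mul_apply, Pi.neg_apply, id]
    rw [e]; exact h3.congr_deriv (by simp only [Pi.neg_apply, id]; ring)
  have hcont : Continuous fun x : ℝ => (x ^ 2 - 1) * Real.exp (-x ^ 2 / 2) := by
    continuity
  have hftc := intervalIntegral.integral_eq_sub_of_hasDerivAt hderiv
    (hcont.intervalIntegrable _ _)
  have hi1 : IntervalIntegrable (fun x : ℝ => (x ^ 2 - 1) * Real.exp (-x ^ 2 / 2))
      volume (-M) M := hcont.intervalIntegrable _ _
  have hi2 : IntervalIntegrable (fun x : ℝ => Real.exp (-x ^ 2 / 2)) volume (-M) M :=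
    (by continuity : Continuous fun x : ℝ => Real.exp (-x ^ 2 / 2)).intervalIntegrable _ _
  have hsplit : (∫ y in (-M)..M, y ^ 2 * Real.exp (-y ^ 2 / 2)) =
      (∫ y in (-M)..M, (y ^ 2 - 1) * Real.exp (-y ^ 2 / 2)) +
        ∫ y in (-M)..M, Real.exp (-y ^ 2 / 2) := by
    rw [← intervalIntegral.integral_add hi1 hi2]
    congr 1; ext y; ring
  rw [hsplit, hftc]
  have : (-M : ℝ) ^ 2 = M ^ 2 := by ring
  rw [this]
  ring

lemma rq_den_eq (M : ℝ) :
    (∫ y in (-M)..M, (Real.exp (-y ^ 2 / 2) - Real.exp (-M ^ 2 / 2)) ^ 2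
        * Real.exp (y ^ 2 / 2)) =
      (∫ y in (-M)..M, Real.exp (-y ^ 2 / 2)) - 4 * M * Real.exp (-M ^ 2 / 2) +
        Real.exp (-M ^ 2) * ∫ y in (-M)..M, Real.exp (y ^ 2 / 2) := by
  have hcongr : ∀ y : ℝ,
      (Real.exp (-y ^ 2 / 2) - Real.exp (-M ^ 2 / 2)) ^ 2 * Real.exp (y ^ 2 / 2) =
        Real.exp (-y ^ 2 / 2) + (-(2 * Real.exp (-M ^ 2 / 2))) +
          Real.exp (-M ^ 2) * Real.exp (y ^ 2 / 2) := by
    intro y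
    have h1 : Real.exp (-y ^ 2 / 2) * Real.exp (y ^ 2 / 2) = 1 := by
      rw [← Real.exp_add, show -y ^ 2 / 2 + y ^ 2 / 2 = 0 by ring, Real.exp_zero]
    have h2 : Real.exp (-M ^ 2 / 2) * Real.exp (-M ^ 2 / 2) = Real.exp (-M ^ 2) := by
      rw [← Real.exp_add]; ring_nf
    linear_combination (Real.exp (-y ^ 2 / 2) - 2 * Real.exp (-M ^ 2 / 2)) * h1
      + Real.exp (y ^ 2 / 2) * h2
  have hi1 : IntervalIntegrable (fun y : ℝ => Real.exp (-y ^ 2 / 2)) volume (-M) M :=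
    (by continuity : Continuous fun y : ℝ => Real.exp (-y ^ 2 / 2)).intervalIntegrable _ _
  have hi2 : IntervalIntegrable (fun _ : ℝ => -(2 * Real.exp (-M ^ 2 / 2))) volume (-M) M :=
    intervalIntegrable_const
  have hi3 : IntervalIntegrable (fun y : ℝ => Real.exp (-M ^ 2) * Real.exp (y ^ 2 / 2))
      volume (-M) M :=
    (by continuity : Continuous fun y : ℝ =>
      Real.exp (-M ^ 2) * Real.exp (y ^ 2 / 2)).intervalIntegrable _ _
  calc (∫ y in (-M)..M, (Real.exp (-y ^ 2 / 2) - Real.exp (-M ^ 2 / 2)) ^ 2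
        * Real.exp (y ^ 2 / 2))
      = ∫ y in (-M)..M, (Real.exp (-y ^ 2 / 2) + (-(2 * Real.exp (-M ^ 2 / 2))) +
          Real.exp (-M ^ 2) * Real.exp (y ^ 2 / 2)) := by
        congr 1; ext y; exact hcongr y
    _ = (∫ y in (-M)..M, Real.exp (-y ^ 2 / 2)) +
          (∫ _ in (-M)..M, -(2 * Real.exp (-M ^ 2 / 2))) +
          ∫ y in (-M)..M, Real.exp (-M ^ 2) * Real.exp (y ^ 2 / 2) := by
        rw [intervalIntegral.integral_add (hi1.add hi2) hi3,
          intervalIntegral.integral_add hi1 hi2]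
    _ = (∫ y in (-M)..M, Real.exp (-y ^ 2 / 2)) - 4 * M * Real.exp (-M ^ 2 / 2) +
          Real.exp (-M ^ 2) * ∫ y in (-M)..M, Real.exp (y ^ 2 / 2) := by
        rw [intervalIntegral.integral_const, intervalIntegral.integral_const_mul]
        simp [smul_eq_mul]; ring

lemma rq_aux_tendsto : Tendsto (fun M : ℝ => M * Real.exp (-M ^ 2 / 2)) atTop (nhds 0) := by
  have h := tendsto_pow_mul_exp_neg_atTop_nhds_zero 1
  apply squeeze_zero' (g := fun M : ℝ => M * Real.exp (-M))
  · filter_upwards [eventually_ge_atTop (0 : ℝ)] with M hM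
    positivity
  · filter_upwards [eventually_ge_atTop (2 : ℝ)] with M hM
    have hM0 : (0 : ℝ) ≤ M := by linarith
    have : -M ^ 2 / 2 ≤ -M := by nlinarith
    exact mul_le_mul_of_nonneg_left (Real.exp_le_exp.mpr this) hM0
  · simpa using h

/-- computation in the proof of Lemma 39: the Rayleigh quotient of the
test function `f_M(y) = e^{−y²/2} − e^{−M²/2}` tends to `1` as `M → ∞`:
`(∫_{−M}^M y² e^{−y²/2} dy) / (∫_{−M}^M (e^{−y²/2} − e^{−M²/2})² e^{y²/2} dy) → 1`. -/
theorem rayleigh_quotient_tendsto_one :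
    Tendsto (fun M : ℝ =>
        (∫ y in (-M)..M, y ^ 2 * Real.exp (-y ^ 2 / 2)) /
          ∫ y in (-M)..M, (Real.exp (-y ^ 2 / 2) - Real.exp (-M ^ 2 / 2)) ^ 2
              * Real.exp (y ^ 2 / 2))
      atTop (nhds 1) := by
  set S : ℝ := ∫ y : ℝ, Real.exp (-y ^ 2 / 2) with hS
  have hSval : S = Real.sqrt (π / (1/2)) := by
    rw [hS, ← integral_gaussian (1/2)]
    congr 1; ext y; congr 1; ring
  have hSpos : 0 < S := by
    rw [hSval]
    exact Real.sqrt_pos.mpr (by positivity)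
  -- main gaussian interval integral limit
  have h1 : Tendsto (fun M : ℝ => ∫ y in (-M)..M, Real.exp (-y ^ 2 / 2)) atTop (nhds S) :=
    intervalIntegral_tendsto_integral rq_integrable tendsto_neg_atTop_atBot tendsto_id
  -- error term 1
  have hm := rq_aux_tendsto
  -- error term 2 : exp(-M²) ∫ exp(y²/2) → 0
  have hE : Tendsto (fun M : ℝ => Real.exp (-M ^ 2) * ∫ y in (-M)..M, Real.exp (y ^ 2 / 2))
      atTop (nhds 0) := by
    apply squeeze_zero' (g := fun M : ℝ => 2 * (M * Real.exp (-M ^ 2 / 2)))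
    · filter_upwards [eventually_ge_atTop (0 : ℝ)] with M hM
      have : 0 ≤ ∫ y in (-M)..M, Real.exp (y ^ 2 / 2) :=
        intervalIntegral.integral_nonneg (by linarith) (fun y _ => (Real.exp_pos _).le)
      positivity
    · filter_upwards [eventually_ge_atTop (0 : ℝ)] with M hM
      have hle : (∫ y in (-M)..M, Real.exp (y ^ 2 / 2)) ≤
          ∫ _ in (-M)..M, Real.exp (M ^ 2 / 2) := by
        apply intervalIntegral.integral_mono_on (by linarith)
        · exact (by continuity : Continuous fun y : ℝ =>
            Real.exp (y ^ 2 / 2)).intervalIntegrable _ _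
        · exact intervalIntegrable_const
        · intro y hy
          rcases hy with ⟨hy1, hy2⟩
          have : y ^ 2 ≤ M ^ 2 := by nlinarith
          exact Real.exp_le_exp.mpr (by linarith)
      have hconst : (∫ _ in (-M)..M, Real.exp (M ^ 2 / 2)) = 2 * M * Real.exp (M ^ 2 / 2) := by
        rw [intervalIntegral.integral_const]; simp [smul_eq_mul]; ring
      have hexp : Real.exp (-M ^ 2) * Real.exp (M ^ 2 / 2) = Real.exp (-M ^ 2 / 2) := by
        rw [← Real.exp_add]; ring_nf
      calc Real.exp (-M ^ 2) * ∫ y in (-M)..M, Real.exp (y ^ 2 / 2)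
          ≤ Real.exp (-M ^ 2) * (2 * M * Real.exp (M ^ 2 / 2)) := by
            apply mul_le_mul_of_nonneg_left _ (Real.exp_pos _).le
            rw [← hconst]; exact hle
        _ = 2 * (M * Real.exp (-M ^ 2 / 2)) := by rw [← hexp]; ring
    · simpa using hm.const_mul 2
  -- numerator and denominator limits
  have hnum : Tendsto (fun M : ℝ => ∫ y in (-M)..M, y ^ 2 * Real.exp (-y ^ 2 / 2))
      atTop (nhds S) := by
    simp only [rq_num_eq]
    have := h1.sub (hm.const_mul 2)
    simpa [mul_assoc] using this
  have hden : Tendsto (fun M : ℝ =>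
      ∫ y in (-M)..M, (Real.exp (-y ^ 2 / 2) - Real.exp (-M ^ 2 / 2)) ^ 2
        * Real.exp (y ^ 2 / 2)) atTop (nhds S) := by
    simp only [rq_den_eq]
    have := (h1.sub (hm.const_mul 4)).add hE
    simpa [mul_assoc] using this
  have := hnum.div hden (ne_of_gt hSpos)
  simpa [Pi.div_def, div_self (ne_of_gt hSpos)] using this
end
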